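/- Let u be a vertex of a connected triangle-free graph G of minimum degree δ with eccentricity d = ecc(u). If |N_{d-1}(u)| ≤ δ - 1, then |N_{d-1}(u)| + |N_d(u)| ≥ 2δ. -/

import Mathlib

/-- The set of vertices at distance exactly `j` from `u` (with `j : ℤ`, so empty for `j < 0`). -/
noncomputable def SimpleGraph.isphere {V : Type*} [Fintype V] (G : SimpleGraph V) (u : V) (j : ℤ) : Finset V :=
  Finset.univ.filter (fun w => (G.dist u w : ℤ) = j)

/-- The eccentricity of a vertex: the maximum distance from it to any vertex. -/
noncomputable def SimpleGraph.eccentNat {V : Type*} [Fintype V] (G : SimpleGraph V) (u : V) : ℕ :=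
  Finset.univ.sup (fun w => G.dist u w)

/-!
Take `w` in the last sphere `N_d(u)`. Since `|N_{d-1}(u)| < δ ≤ deg w`, some neighbour `x` of `w`
lies outside `N_{d-1}(u)`, hence in `N_d(u)`. The neighbourhoods of `w` and `x` all lie in
`N_{d-1}(u) ∪ N_d(u)`, and they are disjoint because `G` is triangle-free, so
`2δ ≤ deg w + deg x ≤ |N_{d-1}(u)| + |N_d(u)|`.
-/

namespace SimpleGraph

variable {V : Type*} [Fintype V] (G : SimpleGraph V)

@[simp]
theorem mem_isphere {u w : V} {j : ℤ} : w ∈ G.isphere u j ↔ (G.dist u w : ℤ) = j := by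
  simp [isphere]

theorem disjoint_isphere {u : V} {j k : ℤ} (hjk : j ≠ k) :
    Disjoint (G.isphere u j) (G.isphere u k) := by
  rw [Finset.disjoint_left]
  intro w hj hk
  rw [mem_isphere] at hj hk
  exact hjk (hj.symm.trans hk)

theorem dist_le_eccentNat (u v : V) : G.dist u v ≤ G.eccentNat u :=
  Finset.le_sup (f := fun w => G.dist u w) (Finset.mem_univ v)

theorem exists_dist_eq_eccentNat [Nonempty V] (u : V) : ∃ w, G.dist u w = G.eccentNat u := by
  obtain ⟨w, -, hw⟩ :=
    Finset.exists_mem_eq_sup Finset.univ Finset.univ_nonempty (fun w => G.dist u w)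
  exact ⟨w, hw.symm⟩

theorem neighborFinset_subset_isphere_union_of_dist_eq_eccentNat [DecidableRel G.Adj]
    [DecidableEq V] (hG : G.Connected) {u y : V} (hy : G.dist u y = G.eccentNat u) :
    G.neighborFinset y ⊆
      G.isphere u ((G.eccentNat u : ℤ) - 1) ∪ G.isphere u (G.eccentNat u : ℤ) := by
  intro z hz
  have hzy : G.dist z y = 1 := dist_eq_one_iff_adj.2 (G.adj_symm ((G.mem_neighborFinset y z).1 hz))
  have htri : G.dist u y ≤ G.dist u z + G.dist z y := hG.dist_triangle
  have hz_le := G.dist_le_eccentNat u z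
  simp only [Finset.mem_union, mem_isphere]
  omega

variable {G}

theorem CliqueFree.disjoint_neighborFinset_of_adj [DecidableRel G.Adj] [DecidableEq V]
    (h : G.CliqueFree 3) {v w : V} (hvw : G.Adj v w) :
    Disjoint (G.neighborFinset v) (G.neighborFinset w) := by
  rw [Finset.disjoint_left]
  intro y hv hw
  rw [mem_neighborFinset] at hv hw
  exact h {v, w, y} (is3Clique_triple_iff.2 ⟨hvw, hv, hw⟩)

theorem CliqueFree.degree_add_degree_le_card [DecidableRel G.Adj] [DecidableEq V]
    (h : G.CliqueFree 3) {v w : V} (hvw : G.Adj v w) {s : Finset V}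
    (hv : G.neighborFinset v ⊆ s) (hw : G.neighborFinset w ⊆ s) :
    G.degree v + G.degree w ≤ s.card := by
  rw [← card_neighborFinset_eq_degree, ← card_neighborFinset_eq_degree,
    ← Finset.card_union_of_disjoint (h.disjoint_neighborFinset_of_adj hvw)]
  exact Finset.card_le_card (Finset.union_subset hv hw)

end SimpleGraph

open SimpleGraph in
theorem last_two_spheres_triangle_free_general {V : Type*} [Fintype V]
    (G : SimpleGraph V) [DecidableRel G.Adj] (hG : G.Connected)
    (htf : G.CliqueFree 3) (δ : ℕ) (hδ : ∀ v, δ ≤ G.degree v)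
    (u : V) (d : ℕ) (hd : d = G.eccentNat u)
    (hsmall : (G.isphere u ((d : ℤ) - 1)).card ≤ δ - 1) :
    2 * δ ≤ (G.isphere u ((d : ℤ) - 1)).card + (G.isphere u (d : ℤ)).card := by
  classical
  rcases Nat.eq_zero_or_pos δ with rfl | hδpos
  · simp
  have := hG.nonempty
  obtain ⟨w, hw⟩ := G.exists_dist_eq_eccentNat u
  subst hd
  have hlast {y : V} (hy : G.dist u y = G.eccentNat u) :=
    G.neighborFinset_subset_isphere_union_of_dist_eq_eccentNat hG hy
  obtain ⟨x, hxw, hx_low⟩ : ∃ x ∈ G.neighborFinset w, x ∉ G.isphere u ((G.eccentNat u : ℤ) - 1) :=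
    Finset.exists_mem_notMem_of_card_lt_card (by
      rw [card_neighborFinset_eq_degree]; have := hδ w; omega)
  have hx : G.dist u x = G.eccentNat u := by
    simpa [hx_low] using hlast hw hxw
  calc 2 * δ ≤ G.degree w + G.degree x := by have := hδ w; have := hδ x; omega
    _ ≤ (G.isphere u ((G.eccentNat u : ℤ) - 1) ∪ G.isphere u (G.eccentNat u : ℤ)).card :=
        htf.degree_add_degree_le_card ((G.mem_neighborFinset w x).1 hxw) (hlast hw) (hlast hx)
    _ = _ := Finset.card_union_of_disjoint (G.disjoint_isphere (by omega))

/-- In a connected triangle-free graph of minimum degree `δ`, if `d = ecc(u)` and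
`|N_{d-1}(u)| ≤ δ - 1`, then `|N_{d-1}(u)| + |N_d(u)| ≥ 2δ`. -/
theorem last_two_spheres_triangle_free {V : Type*} [Fintype V] [DecidableEq V]
    (G : SimpleGraph V) [DecidableRel G.Adj] (hG : G.Connected)
    (htf : G.CliqueFree 3) (δ : ℕ) (hδ : ∀ v, δ ≤ G.degree v)
    (u : V) (d : ℕ) (hd : d = G.eccentNat u)
    (hsmall : (G.isphere u ((d : ℤ) - 1)).card ≤ δ - 1) :
    2 * δ ≤ (G.isphere u ((d : ℤ) - 1)).card + (G.isphere u (d : ℤ)).card :=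
  last_two_spheres_triangle_free_general G hG htf δ hδ u d hd hsmall
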